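/- arXiv:2501.05854 — 5 statements merged into one kernel-verified Lean document; each statement's English description precedes it below -/
import Mathlib

section
/- Let G be a finite d-regular simple graph on n vertices having, for every r with 1 ≤ r ≤ d, an independent exact r-cover. Then n is divisible by lcm{(d+r)/gcd(r,d+r) : 1 ≤ r ≤ d}; equivalently, for each r ∈ [d], (d+r) divides r·n. -/
/-!
Counting the edges between an independent exact `r`-cover `S` and its complement gives
`d * |S| = r * (n - |S|)`, i.e. `(d + r) * |S| = r * n`. Hence `d + r ∣ r * n`, and dividing out
`gcd r (d + r)` leaves `(d + r) / gcd r (d + r) ∣ n`.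
-/

open SimpleGraph

/-- `S` is an independent exact `r`-cover of `G`: `S` is independent and every vertex
outside `S` has exactly `r` neighbours in `S`. -/
def IsIndepExactCover {V : Type*} (G : SimpleGraph V) (r : ℕ) (S : Set V) : Prop :=
  (∀ x ∈ S, ∀ y ∈ S, ¬ G.Adj x y) ∧
  ∀ v ∉ S, (S ∩ G.neighborSet v).ncard = r

theorem Nat.div_gcd_dvd_of_dvd_mul {a b n : ℕ} (ha : 0 < a) (h : b ∣ a * n) :
    b / a.gcd b ∣ n := by
  have hg : 0 < a.gcd b := Nat.gcd_pos_of_pos_left b ha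
  have h' : b / a.gcd b ∣ a / a.gcd b * n := by
    rw [Nat.div_mul_right_comm (Nat.gcd_dvd_left a b)]
    exact Nat.div_dvd_div (Nat.gcd_dvd_right a b) h
  exact (Nat.coprime_div_gcd_div_gcd hg).symm.dvd_of_dvd_mul_left h'

namespace IsIndepExactCover

variable {V : Type*} {G : SimpleGraph V} {d r : ℕ} {S : Set V}

theorem mul_ncard_eq [Finite V] (hreg : ∀ v, (G.neighborSet v).ncard = d)
    (hS : IsIndepExactCover G r S) : S.ncard * d = Sᶜ.ncard * r := by
  classical
  have := Fintype.ofFinite V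
  have hcount := Finset.card_mul_eq_card_mul G.Adj (s := S.toFinset) (t := Sᶜ.toFinset)
    (m := d) (n := r) ?_ ?_
  · simpa [Set.ncard_eq_toFinset_card'] using hcount
  · intro u hu
    rw [← hreg u, Set.ncard_eq_toFinset_card']
    congr 1
    ext v
    simp only [Finset.bipartiteAbove, Finset.mem_filter, Set.mem_toFinset, Set.mem_compl_iff,
      mem_neighborSet, and_iff_right_iff_imp]
    exact fun huv hv => hS.1 u (Set.mem_toFinset.1 hu) v hv huv
  · intro v hv
    rw [← hS.2 v (Set.mem_toFinset.1 hv), Set.ncard_eq_toFinset_card']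
    congr 1
    ext u
    simp [Finset.bipartiteBelow, G.adj_comm]

theorem add_mul_ncard_eq [Finite V] (hreg : ∀ v, (G.neighborSet v).ncard = d)
    (hS : IsIndepExactCover G r S) : (d + r) * S.ncard = r * Nat.card V := by
  rw [← Set.ncard_add_ncard_compl S]
  linarith [hS.mul_ncard_eq hreg]

end IsIndepExactCover

theorem stmt_1 {V : Type*} [Fintype V] (G : SimpleGraph V) (d n : ℕ)
    (hn : Fintype.card V = n)
    (hreg : ∀ v : V, (G.neighborSet v).ncard = d)
    (hcov : ∀ r, 1 ≤ r → r ≤ d → ∃ S : Set V, IsIndepExactCover G r S) :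
    ((Finset.Icc 1 d).lcm fun r => (d + r) / Nat.gcd r (d + r)) ∣ n ∧
      ∀ r, 1 ≤ r → r ≤ d → (d + r) ∣ r * n := by
  have hdvd : ∀ r, 1 ≤ r → r ≤ d → (d + r) ∣ r * n := by
    intro r hr hrd
    obtain ⟨S, hS⟩ := hcov r hr hrd
    refine ⟨S.ncard, ?_⟩
    rw [← hn, ← Nat.card_eq_fintype_card, ← hS.add_mul_ncard_eq hreg]
  refine ⟨Finset.lcm_dvd fun r hr => ?_, hdvd⟩
  obtain ⟨hr, hrd⟩ := Finset.mem_Icc.1 hr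
  exact Nat.div_gcd_dvd_of_dvd_mul hr (hdvd r hr hrd)
end

section
/- Let G be a finite 3-regular simple graph on n vertices that has an independent exact 1-cover and an independent exact 3-cover. Then 8 divides n. -/
open SimpleGraph

theorem stmt_5 {V : Type*} [Fintype V] (G : SimpleGraph V) (n : ℕ)
    (hn : Fintype.card V = n)
    (hreg : ∀ v : V, (G.neighborSet v).ncard = 3)
    (S₁ S₃ : Set V)
    (hS₁ : IsIndepExactCover G 1 S₁) (hS₃ : IsIndepExactCover G 3 S₃) :
    8 ∣ n := by
  classical
  obtain ⟨h1i, h1c⟩ := hS₁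
  obtain ⟨h3i, h3c⟩ := hS₃
  set N : V → Finset V := fun v => Finset.univ.filter (fun w => G.Adj v w) with hN
  have hNmem : ∀ v w : V, w ∈ N v ↔ G.Adj v w := by
    intro v w; simp [hN]
  have hNcard : ∀ v, (N v).card = 3 := by
    intro v
    have h := hreg v
    have hco : G.neighborSet v = ↑(N v) := by
      ext w; simp [hN]
    rwa [hco, Set.ncard_coe_finset] at h
  set s1 : Finset V := Finset.univ.filter (· ∈ S₁) with hs1
  set s3 : Finset V := Finset.univ.filter (· ∈ S₃) with hs3
  have hms1 : ∀ w, w ∈ s1 ↔ w ∈ S₁ := by intro w; simp [hs1]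
  have hms3 : ∀ w, w ∈ s3 ↔ w ∈ S₃ := by intro w; simp [hs3]
  have hconv : ∀ (S : Set V) (v : V),
      (S ∩ G.neighborSet v).ncard
        = ((Finset.univ.filter (· ∈ S)).filter (fun w => G.Adj v w)).card := by
    intro S v
    have hco : S ∩ G.neighborSet v
        = ↑((Finset.univ.filter (· ∈ S)).filter (fun w => G.Adj v w)) := by
      ext w; simp [SimpleGraph.mem_neighborSet]
    rw [hco, Set.ncard_coe_finset]
  have hc1 : ∀ v ∉ S₁, (s1.filter (fun w => G.Adj v w)).card = 1 := by
    intro v hv; rw [hs1, ← hconv]; exact h1c v hv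
  have hc3 : ∀ v ∉ S₃, (s3.filter (fun w => G.Adj v w)).card = 3 := by
    intro v hv; rw [hs3, ← hconv]; exact h3c v hv
  have hall3 : ∀ v ∉ S₃, ∀ w, G.Adj v w → w ∈ S₃ := by
    intro v hv w hw
    have hsub : s3.filter (fun w => G.Adj v w) ⊆ N v := by
      intro x hx; rw [hNmem]; exact (Finset.mem_filter.mp hx).2
    have heq := Finset.eq_of_subset_of_card_le hsub
      (le_of_eq (by rw [hNcard v, hc3 v hv]))
    have hwmem : w ∈ N v := (hNmem v w).mpr hw
    rw [← heq] at hwmem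
    exact (hms3 w).mp (Finset.mem_filter.mp hwmem).1
  set A : Finset V := s1 ∩ s3 with hA'
  set B : Finset V := s1 \ s3 with hB'
  set C : Finset V := s3 \ s1 with hC'
  set D : Finset V := (s1 ∪ s3)ᶜ with hD'
  have hmA : ∀ w, w ∈ A ↔ w ∈ S₁ ∧ w ∈ S₃ := by
    intro w; rw [hA', Finset.mem_inter, hms1, hms3]
  have hmB : ∀ w, w ∈ B ↔ w ∈ S₁ ∧ w ∉ S₃ := by
    intro w; rw [hB', Finset.mem_sdiff, hms1, hms3]
  have hmC : ∀ w, w ∈ C ↔ w ∈ S₃ ∧ w ∉ S₁ := by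
    intro w; rw [hC', Finset.mem_sdiff, hms1, hms3]
  have hmD : ∀ w, w ∈ D ↔ w ∉ S₁ ∧ w ∉ S₃ := by
    intro w
    rw [hD', Finset.mem_compl, Finset.mem_union, hms1, hms3]
    tauto
  -- per-vertex neighbour counts
  have hAD : ∀ v ∈ A, (D.filter (fun w => G.Adj v w)).card = 3 := by
    intro v hv
    obtain ⟨hv1, hv3⟩ := (hmA v).mp hv
    have heq : D.filter (fun w => G.Adj v w) = N v := by
      ext w
      rw [Finset.mem_filter, hNmem, hmD]
      constructor
      · rintro ⟨_, h⟩; exact h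
      · intro h
        refine ⟨⟨fun h1 => h1i v hv1 w h1 h, fun h3 => h3i v hv3 w h3 h⟩, h⟩
    rw [heq, hNcard]
  have hBC : ∀ v ∈ B, (C.filter (fun w => G.Adj v w)).card = 3 := by
    intro v hv
    obtain ⟨hv1, hv3⟩ := (hmB v).mp hv
    have heq : C.filter (fun w => G.Adj v w) = N v := by
      ext w
      rw [Finset.mem_filter, hNmem, hmC]
      constructor
      · rintro ⟨_, h⟩; exact h
      · intro h
        exact ⟨⟨hall3 v hv3 w h, fun h1 => h1i v hv1 w h1 h⟩, h⟩
    rw [heq, hNcard]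
  have hCB : ∀ v ∈ C, (B.filter (fun w => G.Adj v w)).card = 1 := by
    intro v hv
    obtain ⟨hv3, hv1⟩ := (hmC v).mp hv
    have heq : B.filter (fun w => G.Adj v w) = s1.filter (fun w => G.Adj v w) := by
      ext w
      rw [Finset.mem_filter, Finset.mem_filter, hmB, hms1]
      constructor
      · rintro ⟨⟨h1, _⟩, h⟩; exact ⟨h1, h⟩
      · rintro ⟨h1, h⟩; exact ⟨⟨h1, fun h3 => h3i v hv3 w h3 h⟩, h⟩
    rw [heq, hc1 v hv1]
  have hCD : ∀ v ∈ C, (D.filter (fun w => G.Adj v w)).card = 2 := by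
    intro v hv
    obtain ⟨hv3, hv1⟩ := (hmC v).mp hv
    have heq : D.filter (fun w => G.Adj v w)
        = N v \ s1.filter (fun w => G.Adj v w) := by
      ext w
      simp only [Finset.mem_filter, Finset.mem_sdiff, hNmem, hmD, hms1,
        Finset.mem_univ, true_and]
      constructor
      · rintro ⟨⟨h1, _⟩, h⟩; exact ⟨h, fun hc => h1 hc.1⟩
      · rintro ⟨h, h1⟩
        exact ⟨⟨fun hw1 => h1 ⟨hw1, h⟩, fun hw3 => h3i v hv3 w hw3 h⟩, h⟩
    have hsub : s1.filter (fun w => G.Adj v w) ⊆ N v := by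
      intro x hx; rw [hNmem]; exact (Finset.mem_filter.mp hx).2
    rw [heq, Finset.card_sdiff_of_subset hsub, hNcard, hc1 v hv1]
  have hDA : ∀ v ∈ D, (A.filter (fun w => G.Adj v w)).card = 1 := by
    intro v hv
    obtain ⟨hv1, hv3⟩ := (hmD v).mp hv
    have heq : A.filter (fun w => G.Adj v w) = s1.filter (fun w => G.Adj v w) := by
      ext w
      rw [Finset.mem_filter, Finset.mem_filter, hmA, hms1]
      constructor
      · rintro ⟨⟨h1, _⟩, h⟩; exact ⟨h1, h⟩
      · rintro ⟨h1, h⟩; exact ⟨⟨h1, hall3 v hv3 w h⟩, h⟩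
    rw [heq, hc1 v hv1]
  have hDC : ∀ v ∈ D, (C.filter (fun w => G.Adj v w)).card = 2 := by
    intro v hv
    obtain ⟨hv1, hv3⟩ := (hmD v).mp hv
    have heq : C.filter (fun w => G.Adj v w)
        = N v \ s1.filter (fun w => G.Adj v w) := by
      ext w
      simp only [Finset.mem_filter, Finset.mem_sdiff, hNmem, hmC, hms1,
        Finset.mem_univ, true_and]
      constructor
      · rintro ⟨⟨_, h1⟩, h⟩; exact ⟨h, fun hc => h1 hc.1⟩
      · rintro ⟨h, h1⟩
        exact ⟨⟨hall3 v hv3 w h, fun hw1 => h1 ⟨hw1, h⟩⟩, h⟩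
    have hsub : s1.filter (fun w => G.Adj v w) ⊆ N v := by
      intro x hx; rw [hNmem]; exact (Finset.mem_filter.mp hx).2
    rw [heq, Finset.card_sdiff_of_subset hsub, hNcard, hc1 v hv1]
  -- double counting
  have swap : ∀ X Y : Finset V,
      ∑ v ∈ X, (Y.filter (fun w => G.Adj v w)).card
        = ∑ w ∈ Y, (X.filter (fun v => G.Adj w v)).card := by
    intro X Y
    simp_rw [Finset.card_filter]
    rw [Finset.sum_comm]
    refine Finset.sum_congr rfl fun w _ => Finset.sum_congr rfl fun v _ => ?_
    rw [SimpleGraph.adj_comm]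
  have e1 : A.card * 3 = D.card * 1 := by
    rw [← Finset.sum_const_nat (fun v hv => hAD v hv), swap A D,
      Finset.sum_const_nat (fun v hv => hDA v hv)]
  have e2 : B.card * 3 = C.card * 1 := by
    rw [← Finset.sum_const_nat (fun v hv => hBC v hv), swap B C,
      Finset.sum_const_nat (fun v hv => hCB v hv)]
  have e3 : C.card * 2 = D.card * 2 := by
    rw [← Finset.sum_const_nat (fun v hv => hCD v hv), swap C D,
      Finset.sum_const_nat (fun v hv => hDC v hv)]
  -- partition of the vertex set
  have p1 : A.card + B.card = s1.card := Finset.card_inter_add_card_sdiff s1 s3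
  have p2 : C.card + s1.card = (s3 ∪ s1).card := Finset.card_sdiff_add_card s3 s1
  have p3 : (s1 ∪ s3).card + D.card = Fintype.card V :=
    Finset.card_add_card_compl (s1 ∪ s3)
  rw [Finset.union_comm] at p2
  rw [hn] at p3
  omega
end

section
/- Let G be a finite 3-regular simple graph on n vertices that has an independent exact r-cover for every r ∈ {1,2,3}. Then 40 divides n. -/
open SimpleGraph Finset
open scoped Classical

section Aux
variable {V : Type*} [Fintype V] (G : SimpleGraph V)

private lemma dc (A T : Finset V) :
    ∑ y ∈ T, (A.filter (fun x => G.Adj y x)).card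
      = ∑ x ∈ A, (T.filter (fun y => G.Adj x y)).card := by
  classical
  simp_rw [Finset.card_filter]
  rw [Finset.sum_comm]
  refine Finset.sum_congr rfl fun x _ => Finset.sum_congr rfl fun y _ => ?_
  rw [G.adj_comm]

private lemma ncard_filter (S : Set V) (v : V) :
    (S ∩ G.neighborSet v).ncard = (S.toFinset.filter (fun x => G.Adj v x)).card := by
  classical
  rw [Set.ncard_eq_toFinset_card']
  congr 1
  ext x
  simp [SimpleGraph.mem_neighborSet]

private lemma cover_card (hreg : ∀ v : V, (G.neighborSet v).ncard = 3)
    (r : ℕ) (S : Set V) (h : IsIndepExactCover G r S) :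
    r * (Fintype.card V - S.ncard) = 3 * S.ncard ∧ S.ncard ≤ Fintype.card V := by
  obtain ⟨hind, hcnt⟩ := h
  have key := dc G S.toFinset S.toFinsetᶜ
  have hL : ∑ y ∈ S.toFinsetᶜ, (S.toFinset.filter (fun x => G.Adj y x)).card
      = (Fintype.card V - S.ncard) * r := by
    rw [Finset.sum_congr rfl fun y hy => ?_, Finset.sum_const, smul_eq_mul,
      Finset.card_compl, Set.ncard_eq_toFinset_card']
    rw [← ncard_filter, hcnt y (by simpa using hy)]
  have hR : ∑ x ∈ S.toFinset, (S.toFinsetᶜ.filter (fun y => G.Adj x y)).card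
      = S.ncard * 3 := by
    rw [Finset.sum_congr rfl fun x hx => ?_, Finset.sum_const, smul_eq_mul,
      Set.ncard_eq_toFinset_card']
    have hx' : x ∈ S := by simpa using hx
    have : S.toFinsetᶜ.filter (fun y => G.Adj x y) = G.neighborFinset x := by
      ext y
      simp only [Finset.mem_filter, Finset.mem_compl, Set.mem_toFinset,
        SimpleGraph.mem_neighborFinset]
      exact ⟨fun h => h.2, fun h => ⟨fun hy => hind x hx' y hy h, h⟩⟩
    rw [this]
    have := hreg x
    rwa [show (G.neighborSet x).ncard = (G.neighborFinset x).card from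
      Set.ncard_eq_toFinset_card' _ ] at this
  constructor
  · rw [hL, hR] at key
    rw [mul_comm r, key, mul_comm]
  · rw [Set.ncard_eq_toFinset_card']
    exact Finset.card_le_univ _

private lemma cover_inter (hreg : ∀ v : V, (G.neighborSet v).ncard = 3)
    (S1 S3 : Set V) (h1 : IsIndepExactCover G 1 S1) (h3 : IsIndepExactCover G 3 S3) :
    (S3 \ S1).ncard = 3 * (S1 \ S3).ncard := by
  obtain ⟨hind1, hcnt1⟩ := h1
  obtain ⟨hind3, hcnt3⟩ := h3
  have key := dc G (S1 \ S3).toFinset S3.toFinset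
  have hR : ∑ x ∈ (S1 \ S3).toFinset, (S3.toFinset.filter (fun y => G.Adj x y)).card
      = (S1 \ S3).ncard * 3 := by
    rw [Finset.sum_congr rfl fun x hx => ?_, Finset.sum_const, smul_eq_mul,
      Set.ncard_eq_toFinset_card']
    have hx' : x ∈ S1 \ S3 := by simpa using hx
    rw [← ncard_filter, hcnt3 x hx'.2]
  have hL : ∑ y ∈ S3.toFinset, ((S1 \ S3).toFinset.filter (fun x => G.Adj y x)).card
      = (S3 \ S1).ncard := by
    have step : ∀ y ∈ S3.toFinset,
        ((S1 \ S3).toFinset.filter (fun x => G.Adj y x)).card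
          = if y ∈ S1 then 0 else 1 := by
      intro y hy
      have hy' : y ∈ S3 := by simpa using hy
      split_ifs with hyS1
      · rw [Finset.card_eq_zero, Finset.filter_eq_empty_iff]
        intro x hx
        have hx' : x ∈ S1 \ S3 := by simpa using hx
        exact hind1 y hyS1 x hx'.1
      · have heq : (S1 \ S3).toFinset.filter (fun x => G.Adj y x)
            = S1.toFinset.filter (fun x => G.Adj y x) := by
          ext x
          simp only [Finset.mem_filter, Set.mem_toFinset, Set.mem_diff]
          refine ⟨fun h => ⟨h.1.1, h.2⟩, fun h => ⟨⟨h.1, fun hxS3 => ?_⟩, h.2⟩⟩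
          exact hind3 y hy' x hxS3 h.2
        rw [heq, ← ncard_filter, hcnt1 y hyS1]
    rw [Finset.sum_congr rfl step, Finset.sum_ite, Finset.sum_const, Finset.sum_const]
    simp only [smul_eq_mul, mul_zero, mul_one, zero_add]
    rw [Set.ncard_eq_toFinset_card']
    congr 1
    ext y
    simp [Set.mem_diff]
  rw [hL, hR, mul_comm] at key
  exact key

end Aux

theorem stmt_6 {V : Type*} [Fintype V] (G : SimpleGraph V) (n : ℕ)
    (hn : Fintype.card V = n)
    (hreg : ∀ v : V, (G.neighborSet v).ncard = 3)
    (hcov : ∀ r, 1 ≤ r → r ≤ 3 → ∃ S : Set V, IsIndepExactCover G r S) :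
    40 ∣ n := by
  obtain ⟨S1, h1⟩ := hcov 1 (by norm_num) (by norm_num)
  obtain ⟨S2, h2⟩ := hcov 2 (by norm_num) (by norm_num)
  obtain ⟨S3, h3⟩ := hcov 3 (by norm_num) (by norm_num)
  obtain ⟨e1, le1⟩ := cover_card G hreg 1 S1 h1
  obtain ⟨e2, le2⟩ := cover_card G hreg 2 S2 h2
  obtain ⟨e3, le3⟩ := cover_card G hreg 3 S3 h3
  have e13 := cover_inter G hreg S1 S3 h1 h3
  have d1 : (S1 ∩ S3).ncard + (S1 \ S3).ncard = S1.ncard :=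
    Set.ncard_inter_add_ncard_diff_eq_ncard S1 S3 (Set.toFinite _)
  have d3 : (S3 ∩ S1).ncard + (S3 \ S1).ncard = S3.ncard :=
    Set.ncard_inter_add_ncard_diff_eq_ncard S3 S1 (Set.toFinite _)
  have hcomm : (S3 ∩ S1).ncard = (S1 ∩ S3).ncard := by rw [Set.inter_comm]
  rw [hn] at e1 e2 e3 le1 le2 le3
  omega
end

section
/- Let G be a finite 6-regular simple graph on n vertices having an independent exact r-cover for every r ∈ {1,2,3,4,5,6}. Then 9240 divides n. -/
/-!
Counting the edges between an independent exact `r`-cover `S` of a `k`-regular graph and its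
complement gives `k |S| = r (n - |S|)`, i.e. `|S| = r n / (k + r)`; counting the edges between
`S₁ \ S₂` and `S₂ \ S₁` for two covers gives `r₂ |S₁ \ S₂| = r₁ |S₂ \ S₁|`, which pins down
`|S₁ ∩ S₂| = r₁ r₂ n / ((k + r₁)(k + r₂))` when `r₁ ≠ r₂`. For `k = 6`, the covers with
`r = 1, 3, 4, 5` give `7, 3, 5, 11 ∣ n`, and the intersection of the `2`- and `6`-covers gives `8 ∣ n`.
-/

open SimpleGraph

namespace SimpleGraph

variable {V : Type*} [Finite V] (G : SimpleGraph V)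

theorem ncard_mul_eq_ncard_mul {A B : Set V} {p q : ℕ}
    (hA : ∀ a ∈ A, (B ∩ G.neighborSet a).ncard = p)
    (hB : ∀ b ∈ B, (A ∩ G.neighborSet b).ncard = q) :
    A.ncard * p = B.ncard * q := by
  classical
  have := Fintype.ofFinite V
  simp only [Set.ncard_eq_toFinset_card'] at hA hB ⊢
  refine Finset.card_mul_eq_card_mul G.Adj (fun a ha => ?_) (fun b hb => ?_)
  · rw [← hA a (Set.mem_toFinset.mp ha)]
    congr 1
    ext x
    simp [Finset.bipartiteAbove]
  · rw [← hB b (Set.mem_toFinset.mp hb)]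
    congr 1
    ext x
    simp [Finset.bipartiteBelow, G.adj_comm]

end SimpleGraph

namespace IsIndepExactCover

variable {V : Type*} {G : SimpleGraph V} {r r₁ r₂ : ℕ} {S S₁ S₂ : Set V}

theorem sdiff_inter_neighborSet (h : IsIndepExactCover G r S) {a : V} (ha : a ∈ S) (T : Set V) :
    (T \ S) ∩ G.neighborSet a = T ∩ G.neighborSet a := by
  ext x
  simp only [Set.mem_inter_iff, Set.mem_sdiff, mem_neighborSet]
  exact ⟨fun hx => ⟨hx.1.1, hx.2⟩, fun hx => ⟨⟨hx.1, fun hxS => h.1 a ha x hxS hx.2⟩, hx.2⟩⟩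

variable [Finite V]

theorem ncard_mul_add {k : ℕ} (hreg : ∀ v, (G.neighborSet v).ncard = k)
    (h : IsIndepExactCover G r S) : S.ncard * (k + r) = r * Nat.card V := by
  have hcount : S.ncard * k = Sᶜ.ncard * r :=
    G.ncard_mul_eq_ncard_mul
      (fun a ha => by
        rw [Set.compl_eq_univ_sdiff, h.sdiff_inter_neighborSet ha, Set.univ_inter, hreg])
      h.2
  rw [← Set.ncard_add_ncard_compl S]
  linarith

theorem ncard_sdiff_mul_eq (h₁ : IsIndepExactCover G r₁ S₁) (h₂ : IsIndepExactCover G r₂ S₂) :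
    (S₁ \ S₂).ncard * r₂ = (S₂ \ S₁).ncard * r₁ :=
  G.ncard_mul_eq_ncard_mul
    (fun a ha => by rw [h₁.sdiff_inter_neighborSet ha.1, h₂.2 a ha.2])
    (fun b hb => by rw [h₂.sdiff_inter_neighborSet hb.1, h₁.2 b hb.2])

theorem ncard_inter_mul {k : ℕ} (hreg : ∀ v, (G.neighborSet v).ncard = k)
    (h₁ : IsIndepExactCover G r₁ S₁) (h₂ : IsIndepExactCover G r₂ S₂) (hr : r₁ ≠ r₂) :
    (S₁ ∩ S₂).ncard * ((k + r₁) * (k + r₂)) = r₁ * r₂ * Nat.card V := by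
  have e₁ := h₁.ncard_mul_add hreg
  have e₂ := h₂.ncard_mul_add hreg
  have e₁₂ := h₁.ncard_sdiff_mul_eq h₂
  rw [← Set.ncard_inter_add_ncard_sdiff_eq_ncard S₁ S₂] at e₁
  rw [← Set.ncard_inter_add_ncard_sdiff_eq_ncard S₂ S₁, Set.inter_comm] at e₂
  have hr' : (r₂ : ℤ) - r₁ ≠ 0 := sub_ne_zero.mpr (by exact_mod_cast hr.symm)
  zify at e₁ e₂ e₁₂ ⊢
  refine mul_left_cancel₀ hr' ?_
  linear_combination ((k : ℤ) + r₂) * r₂ * e₁ - ((k : ℤ) + r₁) * r₁ * e₂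
    - ((k : ℤ) + r₁) * (k + r₂) * e₁₂

end IsIndepExactCover

theorem stmt_9 {V : Type*} [Fintype V] (G : SimpleGraph V) (n : ℕ)
    (hn : Fintype.card V = n)
    (hreg : ∀ v : V, (G.neighborSet v).ncard = 6)
    (hcov : ∀ r, 1 ≤ r → r ≤ 6 → ∃ S : Set V, IsIndepExactCover G r S) :
    9240 ∣ n := by
  rw [← hn, ← Nat.card_eq_fintype_card]
  have size (r : ℕ) (hr₁ : 1 ≤ r) (hr₆ : r ≤ 6) : ∃ s, s * (6 + r) = r * Nat.card V := by
    obtain ⟨S, hS⟩ := hcov r hr₁ hr₆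
    exact ⟨S.ncard, hS.ncard_mul_add hreg⟩
  have inter : ∃ s, s * ((6 + 2) * (6 + 6)) = 2 * 6 * Nat.card V := by
    obtain ⟨S₂, h₂⟩ := hcov 2 (by norm_num) (by norm_num)
    obtain ⟨S₆, h₆⟩ := hcov 6 (by norm_num) le_rfl
    exact ⟨_, h₂.ncard_inter_mul hreg h₆ (by norm_num)⟩
  obtain ⟨h₇, h₃, h₅, h₁₁, h₈⟩ :
      7 ∣ Nat.card V ∧ 3 ∣ Nat.card V ∧ 5 ∣ Nat.card V ∧ 11 ∣ Nat.card V ∧ 8 ∣ Nat.card V := by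
    refine ⟨?_, ?_, ?_, ?_, ?_⟩
    · obtain ⟨s, h⟩ := size 1 le_rfl (by norm_num); omega
    · obtain ⟨s, h⟩ := size 3 (by norm_num) (by norm_num); omega
    · obtain ⟨s, h⟩ := size 4 (by norm_num) (by norm_num); omega
    · obtain ⟨s, h⟩ := size 5 (by norm_num) (by norm_num); omega
    · obtain ⟨s, h⟩ := inter; omega
  simpa [Nat.lcm] using Nat.lcm_dvd (Nat.lcm_dvd (Nat.lcm_dvd (Nat.lcm_dvd h₇ h₃) h₅) h₁₁) h₈
end

section
/- Let m ≥ 1 and consider the grid graph on ℤ^m. Then the set S = { x ∈ ℤ^m : Σᵢ xᵢ ≡ 0 (mod 3) } is an independent exact m-cover of the 2m-regular grid graph. -/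
open SimpleGraph

lemma sum_key {m : ℕ} (x v : Fin m → ℤ) (i : Fin m) (h : ∀ j, j ≠ i → x j = v j) :
    ∑ j, x j = ∑ j, v j + (x i - v i) := by
  have h2 : ∑ j, (x j - v j) = x i - v i :=
    Finset.sum_eq_single i (fun j _ hj => by rw [h j hj]; ring) (by simp)
  rw [Finset.sum_sub_distrib] at h2
  linarith

theorem stmt_17 (m : ℕ) (hm : 1 ≤ m)
    (G : SimpleGraph (Fin m → ℤ))
    (hG : ∀ x y : Fin m → ℤ, G.Adj x y ↔
      ∃ i : Fin m, (x i = y i + 1 ∨ y i = x i + 1) ∧ ∀ j : Fin m, j ≠ i → x j = y j) :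
    IsIndepExactCover G m
      {x : Fin m → ℤ | (3 : ℤ) ∣ ∑ i : Fin m, x i} := by
  constructor
  · intro x hx y hy hadj
    rw [hG] at hadj
    obtain ⟨i, h1, hj⟩ := hadj
    have hs := sum_key x y i hj
    simp only [Set.mem_setOf_eq] at hx hy
    omega
  · intro v hv
    simp only [Set.mem_setOf_eq] at hv
    set s := ∑ j, v j with hs
    set d : ℤ := if (3 : ℤ) ∣ (s + 1) then 1 else -1 with hd
    have hd3 : (3 : ℤ) ∣ (s + d) := by
      rw [hd]; split_ifs with h
      · exact h
      · omega
    have hdne : d ≠ 0 := by rw [hd]; split_ifs <;> norm_num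
    have heq : {x : Fin m → ℤ | (3 : ℤ) ∣ ∑ i : Fin m, x i} ∩ G.neighborSet v =
        Set.range (fun i : Fin m => Function.update v i (v i + d)) := by
      ext x
      constructor
      · rintro ⟨hxS, hadj⟩
        rw [SimpleGraph.mem_neighborSet, hG] at hadj
        obtain ⟨i, h1, hj⟩ := hadj
        have hj' : ∀ j, j ≠ i → x j = v j := fun j h => (hj j h).symm
        have hsum := sum_key x v i hj'
        simp only [Set.mem_setOf_eq] at hxS
        rw [hsum, ← hs] at hxS
        have hxi : x i = v i + d := by
          rw [hd]; split_ifs with h <;> omega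
        refine ⟨i, ?_⟩
        funext j
        by_cases hji : j = i
        · subst hji; simp [hxi]
        · simp [Function.update, hji, hj' j hji]
      · rintro ⟨i, rfl⟩
        constructor
        · have := sum_key (Function.update v i (v i + d)) v i
            (fun j h => Function.update_of_ne h _ _)
          simp only [Function.update_self] at this
          simp only [Set.mem_setOf_eq, this, ← hs]
          convert hd3 using 2; ring
        · rw [SimpleGraph.mem_neighborSet, hG]
          refine ⟨i, ?_, fun j h => (Function.update_of_ne h _ _).symm⟩
          simp only [Function.update_self]
          have : d = 1 ∨ d = -1 := by rw [hd]; split_ifs <;> simp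
          rcases this with h | h <;> rw [h] <;> [right; left] <;> ring
    rw [heq]
    have hinj : Function.Injective (fun i : Fin m => Function.update v i (v i + d)) := by
      intro i j hij
      by_contra hne
      have := congrFun hij i
      simp only [Function.update_self] at this
      rw [Function.update_of_ne hne] at this
      omega
    rw [← Set.image_univ, Set.ncard_image_of_injective _ hinj, Set.ncard_univ,
      Nat.card_eq_fintype_card, Fintype.card_fin]
end
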